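/- For m, l nonnegative integers with m² + l² ≥ 1, the number λ_{l,m} = -(m²π²/d² + (l(l+n-2) - (n-1))/R²) is strictly negative for all such (l,m) except (l,m) = (1,0), provided R > d√(n-1)/π, d > 0, R > 0, and n ≥ 2. -/

import Mathlib

/-!
Since `l (l + n - 2) - (n - 1) = (l - 1) (l + n - 1)`, the angular part of `-λ_{l,m}` is positive
for `l ≥ 2`, vanishes for `l = 1` and equals `-(n - 1) / R²` for `l = 0`. So only the modes
`(0, m)` with `m ≥ 1` need the hypothesis on `R`, which after squaring says exactly that the
lowest axial frequency `π² / d²` beats `(n - 1) / R²`.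
-/

open Real

noncomputable def cylinderEigenvalue (n : ℕ) (d R : ℝ) (l m : ℕ) : ℝ :=
  -((m : ℝ) ^ 2 * π ^ 2 / d ^ 2 + ((l : ℝ) * ((l : ℝ) + (n : ℝ) - 2) - ((n : ℝ) - 1)) / R ^ 2)

lemma div_sq_lt_pi_sq_div_sq {a d R : ℝ} (hd : 0 < d) (h : d * √a / π < R) :
    a / R ^ 2 < π ^ 2 / d ^ 2 := by
  have hR : 0 < R := lt_of_le_of_lt (by positivity) h
  have hlt : √a / R < π / d := by
    rw [div_lt_div_iff₀ hR hd]
    rw [div_lt_iff₀ pi_pos] at h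
    linarith
  calc a / R ^ 2 ≤ (√a / R) ^ 2 := by
        rw [div_pow]
        gcongr
        exact (le_max_left a 0).trans_eq sq_sqrt'.symm
    _ < (π / d) ^ 2 := by gcongr
    _ = π ^ 2 / d ^ 2 := div_pow π d 2

lemma cylinderEigenvalue_eq (n : ℕ) (d R : ℝ) (l m : ℕ) :
    cylinderEigenvalue n d R l m =
      -((m : ℝ) ^ 2 * π ^ 2 / d ^ 2 + ((l : ℝ) - 1) * ((l : ℝ) + n - 1) / R ^ 2) := by
  unfold cylinderEigenvalue
  ring

lemma cylinderEigenvalue_neg {n : ℕ} {d R : ℝ} (hd : 0 < d) (hR : d * √(n - 1) / π < R)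
    {l m : ℕ} (h₀ : (l, m) ≠ (0, 0)) (h₁ : (l, m) ≠ (1, 0)) :
    cylinderEigenvalue n d R l m < 0 := by
  rw [cylinderEigenvalue_eq, neg_lt_zero]
  obtain rfl | rfl | hl : l = 0 ∨ l = 1 ∨ 2 ≤ l := by omega
  · have hm : (1 : ℝ) ≤ m := by
      norm_cast
      grind
    have hmπ : π ^ 2 / d ^ 2 ≤ (m : ℝ) ^ 2 * π ^ 2 / d ^ 2 := by
      rw [mul_div_assoc]
      exact le_mul_of_one_le_left (by positivity) (one_le_pow₀ hm)
    have hkey := div_sq_lt_pi_sq_div_sq hd hR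
    have hangular : ((0 : ℕ) - 1 : ℝ) * ((0 : ℕ) + n - 1) / R ^ 2 = -((n - 1) / R ^ 2) := by
      push_cast
      ring
    linarith
  · have hm : m ≠ 0 := by grind
    push_cast
    simp only [sub_self, zero_mul, zero_div, add_zero]
    positivity
  · have hR0 : 0 < R := lt_of_le_of_lt (by positivity) hR
    have hl' : (2 : ℝ) ≤ l := by exact_mod_cast hl
    have : 0 < ((l : ℝ) - 1) * ((l : ℝ) + n - 1) / R ^ 2 := by
      apply div_pos _ (by positivity)
      apply mul_pos <;> linarith [(n.cast_nonneg : (0 : ℝ) ≤ n)]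
    linarith [show 0 ≤ (m : ℝ) ^ 2 * π ^ 2 / d ^ 2 by positivity]

theorem eigenvalues_nonpositive_general (n : ℕ) (d R : ℝ) (hd : 0 < d)
    (hcond : R > d * Real.sqrt (n - 1) / π) :
    (∀ l m : ℕ, 1 ≤ m ^ 2 + l ^ 2 → (l, m) ≠ (1, 0) →
      -((m : ℝ) ^ 2 * π ^ 2 / d ^ 2 + ((l : ℝ) * ((l : ℝ) + (n : ℝ) - 2) - ((n : ℝ) - 1)) / R ^ 2) < 0) ∧
    -((0 : ℝ) ^ 2 * π ^ 2 / d ^ 2 + ((1 : ℝ) * ((1 : ℝ) + (n : ℝ) - 2) - ((n : ℝ) - 1)) / R ^ 2) = 0 := by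
  refine ⟨fun l m hlm h₁ => cylinderEigenvalue_neg hd hcond ?_ h₁, by ring⟩
  rintro ⟨⟩
  simp at hlm

theorem eigenvalues_nonpositive (n : ℕ) (hn : 2 ≤ n) (d R : ℝ) (hd : 0 < d) (hR : 0 < R)
    (hcond : R > d * Real.sqrt (n - 1) / π) :
    (∀ l m : ℕ, 1 ≤ m ^ 2 + l ^ 2 → (l, m) ≠ (1, 0) →
      -((m : ℝ) ^ 2 * π ^ 2 / d ^ 2 + ((l : ℝ) * ((l : ℝ) + (n : ℝ) - 2) - ((n : ℝ) - 1)) / R ^ 2) < 0) ∧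
    -((0 : ℝ) ^ 2 * π ^ 2 / d ^ 2 + ((1 : ℝ) * ((1 : ℝ) + (n : ℝ) - 2) - ((n : ℝ) - 1)) / R ^ 2) = 0 :=
  eigenvalues_nonpositive_general n d R hd hcond
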